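/- Let Γ be a finite group acting by automorphisms on a finite group H with gcd(|H|,|Γ|) = 1, let π : H⋊Γ → Γ be the canonical projection, and let c be the set of nonidentity elements x ∈ H⋊Γ whose order equals the order of π(x). Then π induces a bijection from the set of (H⋊Γ)-conjugacy classes contained in c to the set of nontrivial conjugacy classes of Γ: every element of c maps to a nonidentity element of Γ; two elements of c are conjugate in H⋊Γ if and only if their images are conjugate in Γ; and every nonidentity element of Γ is the image of some element of c. -/
import Mathlib

open Subgroup

private lemma coprime_of_modEq_one {m k : ℕ} (h : k ≡ 1 [MOD m]) : Nat.Coprime m k := by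
  unfold Nat.Coprime
  unfold Nat.ModEq at h
  rw [Nat.gcd_rec, h, ← Nat.gcd_rec, Nat.gcd_one_right]

private lemma gcd_aux {pa n' k : ℕ} (h1 : k ≡ 1 [MOD pa]) (h0 : k ≡ 0 [MOD n']) :
    Nat.gcd (pa * n') k = n' := by
  have hc : Nat.Coprime pa k := coprime_of_modEq_one h1
  have hd : n' ∣ k := (Nat.modEq_zero_iff_dvd).mp h0
  rw [Nat.Coprime.gcd_mul_left_cancel n' hc, Nat.gcd_eq_left hd]

private lemma ord_pow_helper {G : Type*} [Group G] [Finite G] {z : G} {n pa n' k : ℕ}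
    (hz : orderOf z = n) (hg : Nat.gcd n k = n') (h : pa * n' = n) (hn' : 0 < n') :
    orderOf (z ^ k) = pa := by
  rw [orderOf_pow, hz, hg, ← h, Nat.mul_div_cancel _ hn']

private theorem conj_of_coprime : ∀ (n : ℕ) {G : Type u} [Group G] [Finite G]
    (N : Subgroup G) [N.Normal] (x y : G), orderOf x = n → orderOf y = n →
    y * x⁻¹ ∈ N → (∀ j : ℕ, x ^ j ∈ N → n ∣ j) → Nat.Coprime (Nat.card N) n →
    ∃ a : G, a * x * a⁻¹ = y := by
  intro n
  induction n using Nat.strong_induction_on with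
  | _ n ih =>
  intro G _ _ N _ x y hxn hyn hmem hx hco
  have hn0 : 0 < n := hxn ▸ orderOf_pos x
  by_cases hn1 : n = 1
  · subst hn1
    have hx1 : x = 1 := orderOf_eq_one_iff.mp hxn
    have hy1 : y = 1 := orderOf_eq_one_iff.mp hyn
    exact ⟨1, by simp [hx1, hy1]⟩
  -- quotient map
  set φ := QuotientGroup.mk' N with hφdef
  have hker : φ.ker = N := QuotientGroup.ker_mk' N
  have hφx : orderOf (φ x) = n := by
    refine Nat.dvd_antisymm (hxn ▸ orderOf_map_dvd φ x) (hx _ ?_)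
    have hk2 : x ^ orderOf (φ x) ∈ φ.ker := by
      rw [MonoidHom.mem_ker, map_pow, pow_orderOf_eq_one]
    rwa [hker] at hk2
  -- prime decomposition
  set p := n.minFac with hpdef
  haveI hp : Fact p.Prime := ⟨Nat.minFac_prime hn1⟩
  set pa := p ^ n.factorization p with hpadef
  set n' := n / pa with hn'def
  have hpan' : pa * n' = n := Nat.ordProj_mul_ordCompl_eq_self n p
  have hcopan' : Nat.Coprime pa n' :=
    Nat.Coprime.pow_left _ (Nat.coprime_ordCompl hp.out hn0.ne')
  have hpa1 : 1 < pa := by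
    have h1 : 0 < n.factorization p :=
      (Nat.Prime.factorization_pos_of_dvd hp.out hn0.ne' (Nat.minFac_dvd n))
    exact Nat.one_lt_pow h1.ne' hp.out.one_lt
  have hn'0 : 0 < n' := Nat.ordCompl_pos p hn0.ne'
  have hn'lt : n' < n := Nat.div_lt_self hn0 hpa1
  -- CRT exponents
  obtain ⟨k, hk1, hk0⟩ := Nat.chineseRemainder hcopan' 1 0
  obtain ⟨k', hk'0, hk'1⟩ := Nat.chineseRemainder hcopan' 0 1
  have hgk : Nat.gcd n k = n' := by rw [← hpan']; exact gcd_aux hk1 hk0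
  have hgk' : Nat.gcd n k' = pa := by
    rw [← hpan', mul_comm]; exact gcd_aux hk'1 hk'0
  have hmodkk' : k + k' ≡ 1 [MOD n] := by
    rw [← hpan']
    exact (Nat.modEq_and_modEq_iff_modEq_mul hcopan').mp
      ⟨by simpa using hk1.add hk'0, by simpa using hk0.add hk'1⟩
  -- the subgroup G₀ = N ⊔ ⟨x⟩
  set G₀ := N ⊔ Subgroup.zpowers x with hG₀def
  have hxG : x ∈ G₀ := Subgroup.mem_sup_right (Subgroup.mem_zpowers x)
  have hyG : y ∈ G₀ := by
    have h1 := mul_mem (Subgroup.mem_sup_left hmem) hxG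
    rwa [inv_mul_cancel_right] at h1
  have hNsub : N.subgroupOf (Subgroup.zpowers x) = ⊥ := by
    rw [Subgroup.eq_bot_iff_forall]
    rintro ⟨z, hz⟩ h
    obtain ⟨m, hm'⟩ := (mem_powers_iff_mem_zpowers).mpr hz
    have hm : x ^ m = z := hm'
    rw [Subgroup.mem_subgroupOf] at h
    have : n ∣ m := hx m (by rw [hm]; exact h)
    have : z = 1 := by rw [← hm]; exact orderOf_dvd_iff_pow_eq_one.mp (hxn ▸ this)
    simpa using this
  have hcard₀ : Nat.card G₀ = Nat.card N * n := by
    have h1 : Nat.card (N.subgroupOf G₀) * (N.subgroupOf G₀).index = Nat.card G₀ :=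
      Subgroup.card_mul_index _
    have h2 : Nat.card (N.subgroupOf G₀) = Nat.card N :=
      Nat.card_congr (Subgroup.subgroupOfEquivOfLe le_sup_left).toEquiv
    have h3 : (N.subgroupOf G₀).index = n := by
      have h4 : (N.subgroupOf G₀).index = N.relIndex G₀ := rfl
      rw [h4, hG₀def, sup_comm, Subgroup.relIndex_sup_right, Subgroup.relIndex,
        hNsub, Subgroup.index_bot, Nat.card_zpowers, hxn]
    rw [← h1, h2, h3]
  have hfact : (Nat.card G₀).factorization p = n.factorization p := by
    have hNn0 : Nat.card N ≠ 0 := Nat.card_pos.ne'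
    have hpN : ¬ p ∣ Nat.card N := by
      intro hd
      have h5 : p ∣ 1 := hco ▸ Nat.dvd_gcd hd (Nat.minFac_dvd n)
      exact hp.out.one_lt.ne' (Nat.dvd_one.mp h5)
    rw [hcard₀, Nat.factorization_mul hNn0 hn0.ne', Finsupp.add_apply,
      Nat.factorization_eq_zero_of_not_dvd hpN, zero_add]
  -- Sylow subgroups
  set X : G₀ := ⟨x, hxG⟩ with hXdef
  set Y : G₀ := ⟨y, hyG⟩ with hYdef
  have hXord : orderOf X = n := by rw [Subgroup.orderOf_mk, hxn]
  have hYord : orderOf Y = n := by rw [Subgroup.orderOf_mk, hyn]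
  have hcardP : Nat.card (Subgroup.zpowers (X ^ k)) = p ^ (Nat.card G₀).factorization p := by
    rw [Nat.card_zpowers, ord_pow_helper hXord hgk hpan' hn'0, hfact]
  have hcardQ : Nat.card (Subgroup.zpowers (Y ^ k)) = p ^ (Nat.card G₀).factorization p := by
    rw [Nat.card_zpowers, ord_pow_helper hYord hgk hpan' hn'0, hfact]
  set Ps := Sylow.ofCard (Subgroup.zpowers (X ^ k)) hcardP with hPsdef
  set Qs := Sylow.ofCard (Subgroup.zpowers (Y ^ k)) hcardQ with hQsdef
  obtain ⟨g, hg⟩ := MulAction.exists_smul_eq G₀ Qs Ps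
  have hYk : Y ^ k ∈ Qs.1 := Subgroup.mem_zpowers _
  have h5 : g * Y ^ k * g⁻¹ ∈ Ps.1 := by
    rw [← hg, Sylow.coe_subgroup_smul]
    simpa using Subgroup.smul_mem_pointwise_smul _ (MulAut.conj g) _ hYk
  obtain ⟨j, hj⟩ := Subgroup.mem_zpowers_iff.mp h5
  have hjG : ((x : G) ^ k) ^ j = (g : G) * y ^ k * (g : G)⁻¹ := by
    have := congrArg (Subgroup.subtype G₀) hj
    simpa using this
  -- quotient computations
  have hφy : φ y = φ x := by
    have h6 : φ (y * x⁻¹) = 1 := by rw [← MonoidHom.mem_ker, hker]; exact hmem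
    rw [map_mul, map_inv, mul_inv_eq_one] at h6
    exact h6
  obtain ⟨i, hi⟩ : ∃ i : ℤ, φ (g : G) = (φ x) ^ i := by
    have h7 : φ (g : G) ∈ Subgroup.map φ (N ⊔ Subgroup.zpowers x) :=
      Subgroup.mem_map_of_mem φ g.2
    rw [Subgroup.map_sup, MonoidHom.map_zpowers,
      (Subgroup.map_eq_bot_iff _).2 (le_of_eq hker.symm), bot_sup_eq] at h7
    obtain ⟨i, hi⟩ := Subgroup.mem_zpowers_iff.mp h7
    exact ⟨i, hi.symm⟩
  have hgyk : (g : G) * y ^ k * (g : G)⁻¹ = x ^ k := by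
    have h8 : (φ x) ^ ((k : ℤ) * j) = (φ x) ^ (k : ℤ) := by
      have h8a := congrArg φ hjG
      rw [map_mul, map_mul, map_inv, map_zpow, map_pow, map_pow, hφy, hi] at h8a
      rw [zpow_mul, zpow_natCast]
      rw [h8a]
      group
    have h9 : ((k : ℤ) * j) ≡ (k : ℤ) [ZMOD (n : ℕ)] := by
      rw [← hφx]; exact (zpow_eq_zpow_iff_modEq).mp h8
    have h10 : ((x : G) ^ k) ^ j = x ^ k := by
      rw [← zpow_natCast x k, ← zpow_mul]
      exact (zpow_eq_zpow_iff_modEq).mpr (hxn ▸ h9)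
    rw [← hjG, h10]
  set y₁ := (g : G) * y * (g : G)⁻¹ with hy₁def
  have hy₁ord : orderOf y₁ = n := by
    have := orderOf_injective (MulAut.conj (g : G)).toMonoidHom
      (MulAut.conj (g : G)).injective y
    simpa [MulAut.conj_apply, hyn] using this
  have hy₁k : y₁ ^ k = x ^ k := by rw [hy₁def, conj_pow, hgyk]
  have hφy₁ : φ y₁ = φ x := by
    rw [hy₁def, map_mul, map_mul, map_inv, hφy, hi]
    group
  -- recurse in the centralizer of x^k
  set C := Subgroup.centralizer {x ^ k} with hCdef
  have hmemC : ∀ z : G, Commute (x ^ k) z → z ∈ C := by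
    intro z hz
    rw [hCdef, Subgroup.mem_centralizer_iff]
    intro m hm
    rw [Set.mem_singleton_iff] at hm
    rw [hm]
    exact hz
  have hxk'C : x ^ k' ∈ C := hmemC _ ((Commute.refl x).pow_pow k k')
  have hy₁k'C : y₁ ^ k' ∈ C := hmemC _ (by rw [← hy₁k]; exact (Commute.refl y₁).pow_pow k k')
  set X' : C := ⟨x ^ k', hxk'C⟩ with hX'def
  set Y' : C := ⟨y₁ ^ k', hy₁k'C⟩ with hY'def
  have h₁ : orderOf X' = n' := by
    rw [Subgroup.orderOf_mk]
    exact ord_pow_helper hxn hgk' (mul_comm n' pa ▸ hpan') (lt_trans one_pos hpa1)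
  have h₂ : orderOf Y' = n' := by
    rw [Subgroup.orderOf_mk]
    exact ord_pow_helper hy₁ord hgk' (mul_comm n' pa ▸ hpan') (lt_trans one_pos hpa1)
  have h₃ : Y' * X'⁻¹ ∈ N.subgroupOf C := by
    rw [Subgroup.mem_subgroupOf]
    show y₁ ^ k' * (x ^ k')⁻¹ ∈ N
    rw [← hker, MonoidHom.mem_ker, map_mul, map_inv, map_pow, map_pow, hφy₁,
      mul_inv_cancel]
  have h₄ : ∀ j : ℕ, X' ^ j ∈ N.subgroupOf C → n' ∣ j := by
    intro j hj'
    rw [Subgroup.mem_subgroupOf] at hj'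
    have h11 : x ^ (k' * j) ∈ N := by rwa [pow_mul]
    have h12 : n' ∣ k' * j := dvd_trans ⟨pa, by rw [← hpan']; ring⟩ (hx _ h11)
    exact (coprime_of_modEq_one hk'1).dvd_of_dvd_mul_left h12
  have h₅ : Nat.Coprime (Nat.card (N.subgroupOf C)) n' := by
    have h13 : Nat.card (N.subgroupOf C) = Nat.card (N ⊓ C : Subgroup G) := by
      rw [← inf_subgroupOf_right N C]
      exact Nat.card_congr (Subgroup.subgroupOfEquivOfLe inf_le_right).toEquiv
    have h14 : Nat.card (N ⊓ C : Subgroup G) ∣ Nat.card N :=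
      Subgroup.card_dvd_of_le inf_le_left
    exact Nat.Coprime.coprime_dvd_left (h13 ▸ h14)
      (hco.coprime_dvd_right ⟨pa, by rw [← hpan']; ring⟩)
  obtain ⟨A, hA⟩ := ih n' hn'lt (N.subgroupOf C) X' Y' h₁ h₂ h₃ h₄ h₅
  have haxk' : (A : G) * x ^ k' * (A : G)⁻¹ = y₁ ^ k' := by
    have := congrArg (Subgroup.subtype C) hA
    simpa using this
  have haxk : (A : G) * x ^ k * (A : G)⁻¹ = x ^ k := by
    have h15 : x ^ k * (A : G) = (A : G) * x ^ k :=
      (Subgroup.mem_centralizer_iff.mp A.2) _ (Set.mem_singleton _)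
    rw [← h15, mul_assoc, mul_inv_cancel, mul_one]
  have hxsplit : x = x ^ k * x ^ k' := by
    rw [← pow_add]
    exact ((pow_eq_pow_iff_modEq.mpr (hxn ▸ hmodkk')).trans (pow_one x)).symm
  have hy₁split : y₁ ^ k * y₁ ^ k' = y₁ := by
    rw [← pow_add]
    exact (pow_eq_pow_iff_modEq.mpr (hy₁ord ▸ hmodkk')).trans (pow_one y₁)
  refine ⟨(g : G)⁻¹ * (A : G), ?_⟩
  have h16 : (A : G) * x * (A : G)⁻¹ = y₁ := by
    calc (A : G) * x * (A : G)⁻¹ = ((A : G) * x ^ k * (A : G)⁻¹) * ((A : G) * x ^ k' * (A : G)⁻¹) := by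
          conv_lhs => rw [hxsplit]
          group
      _ = x ^ k * y₁ ^ k' := by rw [haxk, haxk']
      _ = y₁ ^ k * y₁ ^ k' := by rw [hy₁k]
      _ = y₁ := hy₁split
  calc (g : G)⁻¹ * (A : G) * x * ((g : G)⁻¹ * (A : G))⁻¹
      = (g : G)⁻¹ * ((A : G) * x * (A : G)⁻¹) * (g : G) := by group
    _ = (g : G)⁻¹ * y₁ * (g : G) := by rw [h16]
    _ = y := by rw [hy₁def]; group

open SemidirectProduct

private lemma orderOf_conj' {G : Type*} [Group G] (a b : G) :
    orderOf (a * b * a⁻¹) = orderOf b := by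
  have := orderOf_injective (MulAut.conj a).toMonoidHom (MulAut.conj a).injective b
  simpa [MulAut.conj_apply] using this

/-- Let `Γ` act on a finite group `H` with `gcd(|H|,|Γ|) = 1`, and let `c` be
the set of nonidentity elements of `H ⋊ Γ` whose order equals the order of
their image under the projection `π : H ⋊ Γ → Γ`.  Then `π` induces a bijection
from the conjugacy classes contained in `c` to the nontrivial conjugacy classes
of `Γ`: elements of `c` map to nonidentity elements; two elements of `c` are
conjugate iff their images are; and every nonidentity element of `Γ` is the
image of an element of `c`. -/
theorem stmt_17 {H Γ : Type*} [Group H] [Group Γ] [Finite H] [Finite Γ]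
    (φ : Γ →* MulAut H)
    (hco : Nat.Coprime (Nat.card H) (Nat.card Γ)) :
    let c : Set (H ⋊[φ] Γ) := {x | x ≠ 1 ∧ orderOf x = orderOf (rightHom x)}
    (∀ x ∈ c, rightHom x ≠ (1 : Γ)) ∧
    (∀ x ∈ c, ∀ y ∈ c, (IsConj x y ↔ IsConj (rightHom x) (rightHom y))) ∧
    (∀ γ : Γ, γ ≠ 1 → ∃ x ∈ c, rightHom x = γ) := by
  intro c
  haveI : Finite (H ⋊[φ] Γ) := by
    exact Finite.of_injective (fun x => (x.left, x.right))
      (fun a b h => by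
        cases a; cases b
        simp only [Prod.mk.injEq] at h
        simp [h.1, h.2])
  refine ⟨?_, ?_, ?_⟩
  · rintro x ⟨hx1, hxord⟩ h1
    exact hx1 (orderOf_eq_one_iff.mp (by rw [hxord, h1, orderOf_one]))
  · rintro x ⟨hx1, hxord⟩ y ⟨hy1, hyord⟩
    constructor
    · intro h
      exact (rightHom : H ⋊[φ] Γ →* Γ).map_isConj h
    · intro h
      rw [isConj_iff] at h
      obtain ⟨g, hg⟩ := h
      set y' := (inr g)⁻¹ * y * inr g with hy'def
      have hy'ord : orderOf y' = orderOf y := by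
        rw [hy'def, show (inr g)⁻¹ * y * inr g = (inr g)⁻¹ * y * ((inr g)⁻¹)⁻¹ by group,
          orderOf_conj' ((inr (φ := φ) g)⁻¹) y]
      have hπy' : rightHom y' = rightHom x := by
        rw [hy'def, map_mul, map_mul, map_inv, rightHom_inr, ← hg]
        group
      have hkadv : ∀ j : ℕ, x ^ j ∈ MonoidHom.ker (rightHom : H ⋊[φ] Γ →* Γ) →
          orderOf x ∣ j := by
        intro j hj
        rw [MonoidHom.mem_ker, map_pow] at hj
        rw [hxord]
        exact orderOf_dvd_of_pow_eq_one hj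
      have hcard : Nat.card (MonoidHom.ker (rightHom : H ⋊[φ] Γ →* Γ)) = Nat.card H := by
        rw [← range_inl_eq_ker_rightHom]
        exact (Nat.card_congr (MonoidHom.ofInjective (inl_injective (φ := φ))).toEquiv).symm
      have hcop : Nat.Coprime (Nat.card (MonoidHom.ker (rightHom : H ⋊[φ] Γ →* Γ)))
          (orderOf x) := by
        rw [hcard, hxord]
        exact hco.coprime_dvd_right (orderOf_dvd_natCard _)
      obtain ⟨a, ha⟩ := conj_of_coprime (orderOf x)
        (MonoidHom.ker (rightHom : H ⋊[φ] Γ →* Γ)) x y' rfl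
        (by rw [hy'ord, hyord, ← hg, orderOf_conj', ← hxord])
        (by rw [MonoidHom.mem_ker, map_mul, map_inv, hπy', mul_inv_cancel])
        hkadv hcop
      rw [isConj_iff]
      refine ⟨inr g * a, ?_⟩
      have : inr g * (a * x * a⁻¹) * (inr g)⁻¹ = y := by
        rw [ha, hy'def]; group
      rw [← this]; group
  · intro γ hγ
    refine ⟨inr γ, ⟨?_, ?_⟩, rightHom_inr γ⟩
    · intro h1
      exact hγ (by simpa using congrArg rightHom h1)
    · rw [rightHom_inr, orderOf_injective (inr : Γ →* H ⋊[φ] Γ) inr_injective]
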